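/- arXiv:2604.18344 — 3 statements merged into one kernel-verified Lean document; each statement's English description precedes it below -/
import Mathlib

section
/- Let S be a finite type, μ a probability mass function on S, and K_1,…,K_T : S → PMF(S) Markov kernels defining the forward chain with joint law q(x_{0:T}) = μ(x_0)·∏_{t=1}^T K_t(x_{t-1})(x_t) on S^{T+1}; let q_t denote the marginal of q at time t. Suppose the generative (reverse) chain has joint law p(x_{0:T}) = q_T(x_T)·∏_{t=1}^T R_t(x_t)(x_{t-1}), where for every t, every x_t with q_t(x_t) > 0, and every x_{t-1}, R_t(x_t)(x_{t-1}) equals the true reverse conditional q(x_{t-1} | x_t). Then the two joint laws coincide: p(x_{0:T}) = q(x_{0:T}) for every trajectory (x_0,…,x_T) ∈ S^{T+1}. -/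
/-!
The posterior condition yields the detailed-balance identity
`q_{t+1}(y) R_t(y, z) = K_t(z, y) q_t(z)` for all `y, z`: where `q_{t+1}(y) > 0` this is the
factorisation `q(x_t = z, x_{t+1} = y) = K_t(z, y) q_t(z)` of the two-time marginal, and where
`q_{t+1}(y) = 0` both sides vanish, since that two-time marginal is dominated by `q_{t+1}(y)`.
Multiplying these identities along a trajectory telescopes to
`q_T(x_T) ∏ R_t = q_0(x_0) ∏ K_t`, and `q_0 = μ`.
-/

open Finset

lemma Fin.last_mul_prod_eq_zero_mul_prod {M : Type*} [CommMonoid M] {n : ℕ}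
    (f : Fin (n + 1) → M) (a b : Fin n → M) (h : ∀ i, f i.succ * a i = b i * f i.castSucc) :
    f (Fin.last n) * ∏ i, a i = f 0 * ∏ i, b i := by
  induction n with
  | zero => simp
  | succ n ih =>
    have ih' := ih (fun i => f i.castSucc) (fun i => a i.castSucc) (fun i => b i.castSucc)
      fun i => by simpa only [← Fin.succ_castSucc] using h i.castSucc
    rw [Fin.prod_univ_castSucc, Fin.prod_univ_castSucc, ← Fin.succ_last]
    calc f (Fin.last n).succ * ((∏ i : Fin n, a i.castSucc) * a (Fin.last n))
        = (∏ i : Fin n, a i.castSucc) * (f (Fin.last n).succ * a (Fin.last n)) := by ac_rfl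
      _ = b (Fin.last n) * (f (Fin.last n).castSucc * ∏ i : Fin n, a i.castSucc) := by
        rw [h]; ac_rfl
      _ = f 0 * ((∏ i : Fin n, b i.castSucc) * b (Fin.last n)) := by
        rw [ih', Fin.castSucc_zero]; ac_rfl

lemma Fin.sum_fun_eq_sum_sum_snoc {S M : Type*} [Fintype S] [AddCommMonoid M] {n : ℕ}
    (f : (Fin (n + 1) → S) → M) :
    ∑ x, f x = ∑ x, ∑ y, f (Fin.snoc x y) := by
  rw [← (Fin.snocEquiv fun _ => S).sum_comp, Fintype.sum_prod_type, sum_comm]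
  rfl

namespace MarkovChain

variable {S : Type*} {T : ℕ}

def law (μ : S → ℝ) (K : Fin T → S → S → ℝ) (x : Fin (T + 1) → S) : ℝ :=
  μ (x 0) * ∏ t : Fin T, K t (x t.castSucc) (x t.succ)

lemma law_nonneg {μ : S → ℝ} {K : Fin T → S → S → ℝ} (hμ : ∀ x, 0 ≤ μ x)
    (hK : ∀ t x y, 0 ≤ K t x y) (x : Fin (T + 1) → S) : 0 ≤ law μ K x :=
  mul_nonneg (hμ _) (prod_nonneg fun _ _ => hK _ _ _)

lemma law_snoc (μ : S → ℝ) (K : Fin (T + 1) → S → S → ℝ) (x : Fin (T + 1) → S) (y : S) :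
    law μ K (Fin.snoc x y) =
      law μ (fun t => K t.castSucc) x * K (Fin.last T) (x (Fin.last T)) y := by
  simp [law, Fin.prod_univ_castSucc, ← Fin.castSucc_succ, mul_assoc]

variable [Fintype S]

lemma sum_law_snoc (μ : S → ℝ) {K : Fin (T + 1) → S → S → ℝ}
    (hK : ∀ t x, ∑ y, K t x y = 1) (x : Fin (T + 1) → S) :
    ∑ y, law μ K (Fin.snoc x y) = law μ (fun t => K t.castSucc) x := by
  simp_rw [law_snoc, ← mul_sum, hK, mul_one]

lemma sum_filter_init_law (μ : S → ℝ) {K : Fin (T + 1) → S → S → ℝ}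
    (hK : ∀ t x, ∑ y, K t x y = 1) (P : (Fin (T + 1) → S) → Prop) [DecidablePred P] :
    ∑ x ∈ univ.filter (fun x : Fin (T + 2) → S => P (Fin.init x)), law μ K x =
      ∑ x ∈ univ.filter P, law μ (fun t => K t.castSucc) x := by
  rw [sum_filter, sum_filter, Fin.sum_fun_eq_sum_sum_snoc]
  refine sum_congr rfl fun x _ => ?_
  simp [← sum_law_snoc μ hK x, sum_ite_irrel]

variable [DecidableEq S]

def marginal (μ : S → ℝ) (K : Fin T → S → S → ℝ) (t : Fin (T + 1)) (y : S) : ℝ :=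
  ∑ x ∈ univ.filter (fun x : Fin (T + 1) → S => x t = y), law μ K x

lemma marginal_nonneg {μ : S → ℝ} {K : Fin T → S → S → ℝ} (hμ : ∀ x, 0 ≤ μ x)
    (hK : ∀ t x y, 0 ≤ K t x y) (t : Fin (T + 1)) (y : S) : 0 ≤ marginal μ K t y :=
  sum_nonneg fun x _ => law_nonneg hμ hK x

lemma marginal_zero (μ : S → ℝ) {K : Fin T → S → S → ℝ} (hK : ∀ t x, ∑ y, K t x y = 1)
    (z : S) : marginal μ K 0 z = μ z := by
  induction T with
  | zero => simp [marginal, law, sum_filter, ← (Equiv.funUnique (Fin 1) S).symm.sum_comp]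
  | succ T ih =>
    exact (sum_filter_init_law μ hK fun x => x 0 = z).trans (ih fun t => hK t.castSucc)

lemma marginal_castSucc (μ : S → ℝ) {K : Fin (T + 1) → S → S → ℝ}
    (hK : ∀ t x, ∑ y, K t x y = 1) (t : Fin (T + 1)) (z : S) :
    marginal μ K t.castSucc z = marginal μ (fun t => K t.castSucc) t z :=
  sum_filter_init_law μ hK fun x => x t = z

lemma sum_filter_pair_law (μ : S → ℝ) {K : Fin T → S → S → ℝ}
    (hK : ∀ t x, ∑ y, K t x y = 1) (t : Fin T) (z y : S) :
    ∑ x ∈ univ.filter (fun x : Fin (T + 1) → S => x t.castSucc = z ∧ x t.succ = y), law μ K x =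
      K t z y * marginal μ K t.castSucc z := by
  induction T with
  | zero => exact t.elim0
  | succ T ih =>
    induction t using Fin.lastCases with
    | last =>
      rw [marginal_castSucc μ hK, marginal, sum_filter, sum_filter, Fin.sum_fun_eq_sum_sum_snoc,
        mul_sum]
      refine sum_congr rfl fun x _ => ?_
      by_cases h : x (Fin.last T) = z <;> simp [h, law_snoc, mul_comm]
    | cast t =>
      rw [Fin.succ_castSucc, marginal_castSucc μ hK]
      exact (sum_filter_init_law μ hK fun x => x t.castSucc = z ∧ x t.succ = y).trans
        (ih (fun t => hK t.castSucc) t)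

lemma marginal_succ_mul_eq_mul_marginal {μ : S → ℝ} {K R : Fin T → S → S → ℝ}
    (hμ0 : ∀ x, 0 ≤ μ x) (hK0 : ∀ t x y, 0 ≤ K t x y) (hK1 : ∀ t x, ∑ y, K t x y = 1)
    (hR : ∀ (t : Fin T) (y : S), 0 < marginal μ K t.succ y → ∀ z : S,
      R t y z = (∑ x ∈ univ.filter
          (fun x : Fin (T + 1) → S => x t.castSucc = z ∧ x t.succ = y), law μ K x)
        / marginal μ K t.succ y)
    (t : Fin T) (y z : S) :
    marginal μ K t.succ y * R t y z = K t z y * marginal μ K t.castSucc z := by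
  rw [← sum_filter_pair_law μ hK1]
  rcases (marginal_nonneg hμ0 hK0 t.succ y).eq_or_lt with h0 | hpos
  · have hle : ∑ x ∈ univ.filter (fun x : Fin (T + 1) → S => x t.castSucc = z ∧ x t.succ = y),
        law μ K x ≤ marginal μ K t.succ y :=
      sum_le_sum_of_subset_of_nonneg (monotone_filter_right _ fun _ _ h => h.2)
        fun x _ _ => law_nonneg hμ0 hK0 x
    rw [← h0] at hle
    rw [← h0, zero_mul]
    exact (le_antisymm hle (sum_nonneg fun x _ => law_nonneg hμ0 hK0 x)).symm
  · rw [hR t y hpos z, mul_div_cancel₀ _ hpos.ne']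

end MarkovChain

open MarkovChain in
theorem reverse_matches_posterior_implies_joint_laws_coincide_general
    (S : Type) [Fintype S] [DecidableEq S] (T : ℕ)
    (μ : S → ℝ) (hμ0 : ∀ x, 0 ≤ μ x)
    (K : Fin T → S → S → ℝ)
    (hK0 : ∀ t x y, 0 ≤ K t x y) (hK1 : ∀ t x, ∑ y, K t x y = 1)
    (q : (Fin (T + 1) → S) → ℝ)
    (hq : ∀ x, q x = μ (x 0) * ∏ t : Fin T, K t (x t.castSucc) (x t.succ))
    (marg : Fin (T + 1) → S → ℝ)
    (hmarg : ∀ t y, marg t y =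
      ∑ x ∈ univ.filter (fun x : Fin (T + 1) → S => x t = y), q x)
    (R : Fin T → S → S → ℝ)
    (hRrev : ∀ (t : Fin T) (y : S), 0 < marg t.succ y → ∀ z : S,
      R t y z =
        (∑ x ∈ univ.filter
            (fun x : Fin (T + 1) → S => x t.castSucc = z ∧ x t.succ = y), q x)
          / marg t.succ y)
    (p : (Fin (T + 1) → S) → ℝ)
    (hp : ∀ x, p x = marg (Fin.last T) (x (Fin.last T)) *
        ∏ t : Fin T, R t (x t.succ) (x t.castSucc)) :
    ∀ x : Fin (T + 1) → S, p x = q x := by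
  obtain rfl : q = law μ K := funext hq
  obtain rfl : marg = marginal μ K := funext₂ hmarg
  intro x
  rw [hp, law, ← marginal_zero μ hK1 (x 0)]
  exact Fin.last_mul_prod_eq_zero_mul_prod (fun t => marginal μ K t (x t)) _ _
    fun t => marginal_succ_mul_eq_mul_marginal hμ0 hK0 hK1 hRrev t _ _

/-- **Joint-distribution form of Theorem 1.**
If every reverse kernel `R t` matches the true reverse conditional of the forward chain
wherever the time-`t+1` marginal is positive, then the generative joint law `p`
coincides with the forward joint law `q` on every trajectory. -/
theorem reverse_matches_posterior_implies_joint_laws_coincide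
    (S : Type) [Fintype S] [DecidableEq S] (T : ℕ)
    (μ : S → ℝ) (hμ0 : ∀ x, 0 ≤ μ x) (hμ1 : ∑ x, μ x = 1)
    (K : Fin T → S → S → ℝ)
    (hK0 : ∀ t x y, 0 ≤ K t x y) (hK1 : ∀ t x, ∑ y, K t x y = 1)
    (q : (Fin (T + 1) → S) → ℝ)
    (hq : ∀ x, q x = μ (x 0) * ∏ t : Fin T, K t (x t.castSucc) (x t.succ))
    (marg : Fin (T + 1) → S → ℝ)
    (hmarg : ∀ t y, marg t y =
      ∑ x ∈ univ.filter (fun x : Fin (T + 1) → S => x t = y), q x)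
    (R : Fin T → S → S → ℝ)
    (hR0 : ∀ t x y, 0 ≤ R t x y) (hR1 : ∀ t x, ∑ y, R t x y = 1)
    (hRrev : ∀ (t : Fin T) (y : S), 0 < marg t.succ y → ∀ z : S,
      R t y z =
        (∑ x ∈ univ.filter
            (fun x : Fin (T + 1) → S => x t.castSucc = z ∧ x t.succ = y), q x)
          / marg t.succ y)
    (p : (Fin (T + 1) → S) → ℝ)
    (hp : ∀ x, p x = marg (Fin.last T) (x (Fin.last T)) *
        ∏ t : Fin T, R t (x t.succ) (x t.castSucc)) :
    ∀ x : Fin (T + 1) → S, p x = q x :=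
  reverse_matches_posterior_implies_joint_laws_coincide_general S T μ hμ0 K hK0 hK1 q hq marg hmarg
    R hRrev p hp
end

section
/- Let P and Q be probability mass functions on a finite type S with Q absolutely continuous with respect to P (P(x) = 0 implies Q(x) = 0), let C ⊆ S with Q(C) = 0, and let L ∈ ℝ satisfy −∑_{x : Q(x)>0} Q(x)·log P(x) ≤ L (i.e., L upper-bounds the expected negative log-likelihood of the model P under the data Q). Then P(C) ≤ √( (L − H(Q)) / 2 ), where H(Q) = −∑_{x : Q(x)>0} Q(x)·log Q(x). -/
/-!
Write `p = P(C)` and `T = {x | Q x > 0}`. Since `Q(C) = 0`, `T` misses `C`, so `P(T) ≤ 1 - p`.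
Jensen's inequality for `log` gives `KL(Q ‖ P) ≥ -log P(T) ≥ -log (1 - p)`, and
`-log (1 - p) ≥ 2 p²` (a special case of Pinsker's inequality). Finally
`KL(Q ‖ P) = CE(Q, P) - H(Q) ≤ L - H(Q)`.
-/

open Finset Real

theorem two_mul_sq_le_neg_log_one_sub {x : ℝ} (hx₀ : 0 ≤ x) (hx₁ : x < 1) :
    2 * x ^ 2 ≤ -log (1 - x) := by
  let F (y : ℝ) : ℝ := -log (1 - y) - 2 * y ^ 2
  have hF : ∀ y ∈ Set.Icc 0 x, HasDerivAt F ((1 - y)⁻¹ - 4 * y) y := fun y hy => by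
    refine ((((hasDerivAt_id' y).const_sub 1).log (by linarith [hy.2])).fun_neg.fun_sub
      ((hasDerivAt_pow 2 y).const_mul 2)).congr_deriv ?_
    norm_num
    ring
  suffices MonotoneOn F (Set.Icc 0 x) by simpa [F] using this ⟨le_rfl, hx₀⟩ ⟨hx₀, le_rfl⟩ hx₀
  refine monotoneOn_of_hasDerivWithinAt_nonneg (convex_Icc 0 x)
    (fun y hy => (hF y hy).continuousAt.continuousWithinAt)
    (fun y hy => (hF y (interior_subset hy)).hasDerivWithinAt) ?_
  intro y hy
  rw [interior_Icc] at hy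
  have hy₁ : 0 < 1 - y := by linarith [hy.2]
  have : (1 - y)⁻¹ - 4 * y = (1 - 2 * y) ^ 2 / (1 - y) := by field_simp; ring
  rw [this]
  positivity

theorem neg_log_sum_le_sum_mul_log_div {ι : Type*} (s : Finset ι) (p q : ι → ℝ)
    (hp : ∀ i ∈ s, 0 < p i) (hq : ∀ i ∈ s, 0 < q i) (hq₁ : ∑ i ∈ s, q i = 1) :
    -log (∑ i ∈ s, p i) ≤ ∑ i ∈ s, q i * log (q i / p i) := by
  have jensen := strictConcaveOn_log_Ioi.concaveOn.le_map_sum (fun i hi => (hq i hi).le) hq₁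
    (fun i hi => Set.mem_Ioi.2 (div_pos (hp i hi) (hq i hi)))
  simp only [smul_eq_mul] at jensen
  rw [sum_congr rfl fun i hi => mul_div_cancel₀ (p i) (hq i hi).ne'] at jensen
  rw [← neg_le_neg_iff, neg_neg, ← sum_neg_distrib]
  refine le_of_eq_of_le (sum_congr rfl fun i hi => ?_) jensen
  rw [← mul_neg, ← log_inv, inv_div]

theorem sum_le_one_sub_sum_of_disjoint {ι : Type*} [Fintype ι] {p : ι → ℝ}
    (hp : ∀ i, 0 ≤ p i) (hp₁ : ∑ i, p i = 1) {s t : Finset ι} (hst : Disjoint s t) :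
    ∑ i ∈ s, p i ≤ 1 - ∑ i ∈ t, p i := by
  classical
  have := sum_le_univ_sum_of_nonneg (s := s ∪ t) hp
  rw [sum_union hst, hp₁] at this
  linarith

/-- Concluding bound of Theorem 2: if `Q(C) = 0` and the cross-entropy of `P` under `Q`
is bounded by `L` (e.g. by the VLB objective), then
`P(C) ≤ √((L − H(Q)) / 2)` where `H(Q) = −∑_{Q x > 0} Q x * log (Q x)`. -/
theorem conflict_prob_le_sqrt_vlb_sub_entropy
    (S : Type) [Fintype S]
    (P Q : S → ℝ)
    (hP0 : ∀ x, 0 ≤ P x) (hP1 : ∑ x, P x = 1)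
    (hQ0 : ∀ x, 0 ≤ Q x) (hQ1 : ∑ x, Q x = 1)
    (hac : ∀ x, P x = 0 → Q x = 0)
    (C : Finset S) (hC : ∑ x ∈ C, Q x = 0)
    (L : ℝ)
    (hL : -(∑ x ∈ univ.filter (fun x => 0 < Q x), Q x * Real.log (P x)) ≤ L) :
    ∑ x ∈ C, P x ≤
      Real.sqrt
        ((L - (-(∑ x ∈ univ.filter (fun x => 0 < Q x), Q x * Real.log (Q x)))) / 2) := by
  classical
  set T := univ.filter (fun x => 0 < Q x)
  set p := ∑ x ∈ C, P x
  have hQT : ∀ x ∈ T, 0 < Q x := fun x hx => (mem_filter.1 hx).2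
  have hPT : ∀ x ∈ T, 0 < P x := fun x hx =>
    (hP0 x).lt_of_ne fun h => (hQT x hx).ne' (hac x h.symm)
  have hQT₁ : ∑ x ∈ T, Q x = 1 :=
    hQ1 ▸ sum_filter_of_ne fun x _ h => (hQ0 x).lt_of_ne' h
  have hTC : Disjoint T C := disjoint_left.2 fun x hxT hxC =>
    (hQT x hxT).ne' ((sum_eq_zero_iff_of_nonneg fun x _ => hQ0 x).1 hC x hxC)
  have hPT_le : ∑ x ∈ T, P x ≤ 1 - p := sum_le_one_sub_sum_of_disjoint hP0 hP1 hTC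
  have hPT_pos : 0 < ∑ x ∈ T, P x :=
    sum_pos hPT (nonempty_of_sum_ne_zero (hQT₁.trans_ne one_ne_zero))
  have hp : 0 ≤ p := sum_nonneg fun x _ => hP0 x
  have hkl : ∑ x ∈ T, Q x * log (Q x / P x)
      = ∑ x ∈ T, Q x * log (Q x) - ∑ x ∈ T, Q x * log (P x) := by
    rw [← sum_sub_distrib]
    refine sum_congr rfl fun x hx => ?_
    rw [log_div (hQT x hx).ne' (hPT x hx).ne', mul_sub]
  have key : 2 * p ^ 2 ≤ ∑ x ∈ T, Q x * log (Q x / P x) := calc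
    2 * p ^ 2 ≤ -log (1 - p) := two_mul_sq_le_neg_log_one_sub hp (by linarith)
    _ ≤ -log (∑ x ∈ T, P x) := neg_le_neg (log_le_log hPT_pos hPT_le)
    _ ≤ _ := neg_log_sum_le_sum_mul_log_div T P Q hPT hQT hQT₁
  exact (le_abs_self p).trans (abs_le_sqrt (by linarith))
end

section
/- Let S be a finite type, μ a probability mass function on S, and K_1,…,K_T : S → PMF(S) Markov kernels defining the forward chain with joint law q(x_{0:T}) = μ(x_0)·∏_{t=1}^T K_t(x_{t−1})(x_t); suppose q(x_{0:T}) > 0 for all trajectories. Let π be a PMF on S and R_1,…,R_T : S → PMF(S) kernels, all strictly positive, defining the generative law p(x_{0:T}) = π(x_T)·∏_{t=1}^T R_t(x_t)(x_{t−1}). Then the expected log-ratio decomposes as E_q[ log( p(X_{0:T}) / q(X_{1:T} | X_0) ) ] = E_q[ log R_1(X_1)(X_0) ] − ∑_{t=2}^T E_q[ D( q(X_{t−1} ∈ · | X_t, X_0) ‖ R_t(X_t) ) ] − E_{μ}[ D( q(X_T ∈ · | X_0) ‖ π ) ], where all conditional distributions are those of the forward chain, q(X_{1:T}|X_0=x_0)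 = q(x_{0:T})/μ(x_0), and D(·‖·) denotes the Kullback–Leibler divergence between PMFs on S. -/
open Finset

/-- Kullback–Leibler divergence between two mass functions on a finite type:
`D(f‖g) = ∑_{z : f z > 0} f z * log (f z / g z)`. -/
noncomputable def KLdiv {S : Type} [Fintype S] (f g : S → ℝ) : ℝ :=
  ∑ z ∈ Finset.univ.filter (fun z => 0 < f z), f z * Real.log (f z / g z)

/-!
Bayes' rule for the strictly positive forward chain gives
`q(x_{1:T} ∣ x_0) = q(x_T ∣ x_0) ∏_t q(x_{t-1} ∣ x_t, x_0)`: by the Markov property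
`q(x_{t-1}, x_t ∣ x_0) = q(x_{t-1} ∣ x_0) K_t(x_{t-1}, x_t)`, and the one-time marginals
`q(x_t ∣ x_0)` telescope. Hence `log (p / q(· ∣ x_0))` splits into per-step log-ratios, and
conditioning on `(X_0, X_t)` turns the expectation of each of them into an expected
Kullback–Leibler divergence. At the first step the posterior `q(x_0 ∣ x_1, x_0)` is a point mass,
so its divergence is the reconstruction term `-log R_1(x_1)(x_0)`.
-/

section CondMass

variable {Ω α : Type*} {S : Type} [Fintype Ω] [DecidableEq α] [DecidableEq S]

/-- The law of `ψ` given `φ = a` under the unnormalised weights `w` (`0` on a null fiber). -/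
noncomputable def condMass (w : Ω → ℝ) (φ : Ω → α) (ψ : Ω → S) (a : α) (z : S) : ℝ :=
  (∑ x ∈ univ.filter (fun x => φ x = a ∧ ψ x = z), w x) /
    ∑ x ∈ univ.filter (fun x => φ x = a), w x

theorem condMass_pos {w : Ω → ℝ} (hw : ∀ x, 0 < w x) (φ : Ω → α) (ψ : Ω → S) (x : Ω) :
    0 < condMass w φ ψ (φ x) (ψ x) :=
  div_pos (sum_pos (fun y _ => hw y) ⟨x, by simp⟩) (sum_pos (fun y _ => hw y) ⟨x, by simp⟩)

theorem condMass_eq_ite_of_comp {w : Ω → ℝ} (hw : ∀ x, 0 < w x) {φ : Ω → α} {ψ : Ω → S}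
    {f : α → S} (hψ : ∀ x, ψ x = f (φ x)) (x : Ω) :
    condMass w φ ψ (φ x) = fun z => if z = f (φ x) then 1 else 0 := by
  funext z
  rw [condMass]
  split_ifs with hz
  · have hfiber : univ.filter (fun y => φ y = φ x ∧ ψ y = z) = univ.filter (fun y => φ y = φ x) :=
      filter_congr fun y _ => by simp only [hψ, hz, and_iff_left_iff_imp]; exact congrArg f
    rw [hfiber, div_self (sum_pos (fun y _ => hw y) ⟨x, by simp⟩).ne']
  · have hfiber : univ.filter (fun y => φ y = φ x ∧ ψ y = z) = ∅ :=
      filter_false_of_mem fun y _ ⟨hφ, hψz⟩ => hz (hψz ▸ hφ ▸ hψ y)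
    rw [hfiber, sum_empty, zero_div]

theorem sum_mul_comp_eq_sum_fiber [Fintype α] (w : Ω → ℝ) (g : Ω → α) (F : α → ℝ) :
    ∑ x, w x * F (g x) = ∑ a, (∑ x ∈ univ.filter (fun x => g x = a), w x) * F a := by
  rw [← sum_fiberwise univ g]
  refine sum_congr rfl fun a _ => ?_
  rw [sum_mul]
  exact sum_congr rfl fun x hx => by rw [(mem_filter.mp hx).2]

variable [Fintype S]

theorem mul_KLdiv_condMass {w : Ω → ℝ} (hw : ∀ x, 0 ≤ w x) (φ : Ω → α) (ψ : Ω → S)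
    (a : α) (r : S → ℝ) :
    (∑ x ∈ univ.filter (fun x => φ x = a), w x) * KLdiv (condMass w φ ψ a) r
      = ∑ z, (∑ x ∈ univ.filter (fun x => φ x = a ∧ ψ x = z), w x)
          * Real.log (condMass w φ ψ a z / r z) := by
  set W := ∑ x ∈ univ.filter (fun x => φ x = a), w x
  have hmass : ∀ z, W * condMass w φ ψ a z
      = ∑ x ∈ univ.filter (fun x => φ x = a ∧ ψ x = z), w x := by
    intro z
    rcases eq_or_ne W 0 with hW | hW
    · have hle : ∑ x ∈ univ.filter (fun x => φ x = a ∧ ψ x = z), w x ≤ W :=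
        sum_le_sum_of_subset_of_nonneg (monotone_filter_right _ fun _ _ => And.left)
          fun x _ _ => hw x
      rw [hW, zero_mul]
      exact (le_antisymm (hW ▸ hle) (sum_nonneg fun x _ => hw x)).symm
    · exact mul_div_cancel₀ _ hW
  unfold KLdiv
  rw [mul_sum, sum_filter]
  refine sum_congr rfl fun z _ => ?_
  split_ifs with hz
  · rw [← mul_assoc, hmass]
  · have hz0 : condMass w φ ψ a z = 0 :=
      le_antisymm (not_lt.mp hz) (div_nonneg (sum_nonneg fun x _ => hw x)
        (sum_nonneg fun x _ => hw x))
    rw [← hmass, hz0, mul_zero, zero_mul]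

theorem sum_mul_log_condMass_div [Fintype α] {w : Ω → ℝ} (hw : ∀ x, 0 ≤ w x)
    (φ : Ω → α) (ψ : Ω → S) (r : α → S → ℝ) :
    ∑ x, w x * Real.log (condMass w φ ψ (φ x) (ψ x) / r (φ x) (ψ x))
      = ∑ x, w x * KLdiv (condMass w φ ψ (φ x)) (r (φ x)) := by
  rw [sum_mul_comp_eq_sum_fiber w (fun x => (φ x, ψ x))
      (fun p => Real.log (condMass w φ ψ p.1 p.2 / r p.1 p.2)),
    sum_mul_comp_eq_sum_fiber w φ (fun a => KLdiv (condMass w φ ψ a) (r a)),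
    Fintype.sum_prod_type]
  refine sum_congr rfl fun a _ => ?_
  simp only [Prod.mk.injEq]
  exact (mul_KLdiv_condMass hw φ ψ a (r a)).symm

end CondMass

theorem KLdiv_ite_eq {S : Type} [Fintype S] [DecidableEq S] (a : S) (g : S → ℝ) :
    KLdiv (fun z => if z = a then 1 else 0) g = -Real.log (g a) := by
  have hsupp : univ.filter (fun z : S => 0 < if z = a then (1 : ℝ) else 0) = {a} := by
    ext z
    by_cases hz : z = a <;> simp [hz]
  rw [KLdiv, hsupp, sum_singleton, if_pos rfl, one_mul, one_div, Real.log_inv]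

theorem log_mul_prod_div_mul_prod {ι : Type*} (s : Finset ι) {a b : ℝ} {f g : ι → ℝ}
    (ha : 0 < a) (hb : 0 < b) (hf : ∀ i ∈ s, 0 < f i) (hg : ∀ i ∈ s, 0 < g i) :
    Real.log (a * (∏ i ∈ s, f i) / (b * ∏ i ∈ s, g i))
      = -(Real.log (b / a) + ∑ i ∈ s, Real.log (g i / f i)) := by
  have hratio : a * (∏ i ∈ s, f i) / (b * ∏ i ∈ s, g i) = (b / a * ∏ i ∈ s, g i / f i)⁻¹ := by
    rw [prod_div_distrib, mul_inv, inv_div, inv_div]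
    ring
  rw [hratio, Real.log_inv, Real.log_mul (div_pos hb ha).ne'
      (prod_pos fun i hi => div_pos (hg i hi) (hf i hi)).ne',
    Real.log_prod fun i hi => (div_pos (hg i hi) (hf i hi)).ne']

theorem Fin.prod_castSucc_div_succ {𝕜 : Type*} [Field 𝕜] {n : ℕ} {g : Fin (n + 1) → 𝕜}
    (hg : ∀ i, g i ≠ 0) :
    ∏ i : Fin n, g i.castSucc / g i.succ = g 0 / g (Fin.last n) := by
  rw [prod_div_distrib, div_eq_div_iff (prod_ne_zero_iff.2 fun i _ => hg _) (hg _),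
    ← Fin.prod_univ_castSucc, ← Fin.prod_univ_succ]

section Chain

variable {S : Type} {n : ℕ}

def chainWeight (μ : S → ℝ) (K : Fin n → S → S → ℝ) (x : Fin (n + 1) → S) : ℝ :=
  μ (x 0) * ∏ s, K s (x s.castSucc) (x s.succ)

theorem chainWeight_snoc (μ : S → ℝ) (K : Fin (n + 1) → S → S → ℝ) (y : Fin (n + 1) → S)
    (b : S) :
    chainWeight μ K (Fin.snoc y b)
      = chainWeight μ (Fin.init K) y * K (Fin.last n) (y (Fin.last n)) b := by
  simp only [chainWeight, Fin.prod_univ_castSucc, Fin.succ_castSucc, Fin.succ_last,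
    Fin.snoc_castSucc, Fin.snoc_last, Fin.init, mul_assoc]
  rfl

variable [Fintype S]

theorem sum_pi_fin_succ_eq_sum_snoc {β : Type*} [AddCommMonoid β] (f : (Fin (n + 1) → S) → β) :
    ∑ x, f x = ∑ y : Fin n → S, ∑ b, f (Fin.snoc y b) := by
  rw [← (Fin.snocEquiv fun _ => S).sum_comp, Fintype.sum_prod_type, sum_comm]
  rfl

theorem sum_filter_init_chainWeight (μ : S → ℝ) {K : Fin (n + 1) → S → S → ℝ}
    (hK : ∀ z, ∑ b, K (Fin.last n) z b = 1)
    (P : (Fin (n + 1) → S) → Prop) [DecidablePred P] :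
    ∑ x ∈ univ.filter (fun x => P (Fin.init x)), chainWeight μ K x
      = ∑ y ∈ univ.filter P, chainWeight μ (Fin.init K) y := by
  simp only [sum_filter]
  rw [sum_pi_fin_succ_eq_sum_snoc]
  refine sum_congr rfl fun y _ => ?_
  simp only [Fin.init_snoc, chainWeight_snoc]
  split_ifs
  · rw [← mul_sum, hK, mul_one]
  · exact sum_const_zero

variable [DecidableEq S]

theorem sum_filter_zero_chainWeight (μ : S → ℝ) {K : Fin n → S → S → ℝ}
    (hK : ∀ t z, ∑ b, K t z b = 1) (a : S) :
    ∑ x ∈ univ.filter (fun x => x 0 = a), chainWeight μ K x = μ a := by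
  induction n with
  | zero =>
    have hsingleton : univ.filter (fun x : Fin 1 → S => x 0 = a) = {fun _ => a} := by
      ext x
      simp [funext_iff, Fin.forall_fin_one]
    simp [hsingleton, chainWeight]
  | succ n ih =>
    rw [← ih (fun t => hK t.castSucc)]
    exact sum_filter_init_chainWeight μ (hK _) (fun y => y 0 = a)

theorem sum_filter_step_chainWeight (μ : S → ℝ) {K : Fin n → S → S → ℝ}
    (hK : ∀ t z, ∑ b, K t z b = 1) (t : Fin n) (a z b : S) :
    ∑ x ∈ univ.filter (fun x => x 0 = a ∧ x t.castSucc = z ∧ x t.succ = b), chainWeight μ K x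
      = (∑ x ∈ univ.filter (fun x => x 0 = a ∧ x t.castSucc = z), chainWeight μ K x)
          * K t z b := by
  induction n with
  | zero => exact t.elim0
  | succ n ih =>
    induction t using Fin.lastCases with
    | last =>
      simp only [sum_filter]
      rw [sum_pi_fin_succ_eq_sum_snoc (n := n + 1), sum_pi_fin_succ_eq_sum_snoc (n := n + 1),
        sum_mul]
      refine sum_congr rfl fun y _ => ?_
      simp only [Fin.snoc_castSucc, Fin.succ_last, Fin.snoc_last, chainWeight_snoc]
      by_cases h : y 0 = a ∧ y (Fin.last n) = z
      · simp [h, ← mul_sum, hK]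
      · simp [← and_assoc, h]
    | cast t =>
      have h1 := sum_filter_init_chainWeight μ (hK (Fin.last n))
        (fun y => y 0 = a ∧ y t.castSucc = z ∧ y t.succ = b)
      have h2 := sum_filter_init_chainWeight μ (hK (Fin.last n))
        (fun y => y 0 = a ∧ y t.castSucc = z)
      simp only [Fin.init, Fin.castSucc_zero] at h1 h2
      rw [Fin.succ_castSucc]
      refine h1.trans ((ih (fun s => hK s.castSucc) t).trans ?_)
      exact congrArg (· * K t.castSucc z b) h2.symm

theorem sum_chainWeight_mul_comp_zero (μ : S → ℝ) {K : Fin n → S → S → ℝ}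
    (hK : ∀ t z, ∑ b, K t z b = 1) (F : S → ℝ) :
    ∑ x, chainWeight μ K x * F (x 0) = ∑ a, μ a * F a := by
  rw [sum_mul_comp_eq_sum_fiber _ (fun x : Fin (n + 1) → S => x 0)]
  simp only [sum_filter_zero_chainWeight μ hK]

theorem chainWeight_div_eq_condMass_mul_prod (μ : S → ℝ) {K : Fin n → S → S → ℝ}
    (hK : ∀ t z, ∑ b, K t z b = 1) (hpos : ∀ x, 0 < chainWeight μ K x) (x : Fin (n + 1) → S) :
    chainWeight μ K x / μ (x 0)
      = condMass (chainWeight μ K) (fun x' => x' 0) (fun x' => x' (Fin.last n))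
          (x 0) (x (Fin.last n))
        * ∏ t : Fin n, condMass (chainWeight μ K) (fun x' => (x' 0, x' t.succ))
            (fun x' => x' t.castSucc) (x 0, x t.succ) (x t.castSucc) := by
  set g : Fin (n + 1) → ℝ := fun i =>
    ∑ x' ∈ univ.filter (fun x' => x' 0 = x 0 ∧ x' i = x i), chainWeight μ K x'
  have hg : ∀ i, g i ≠ 0 := fun i => (sum_pos (fun y _ => hpos y) ⟨x, by simp⟩).ne'
  have hg0 : g 0 = μ (x 0) := by simp only [g, and_self, sum_filter_zero_chainWeight μ hK]
  have hfactor : ∀ t : Fin n, condMass (chainWeight μ K) (fun x' => (x' 0, x' t.succ))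
      (fun x' => x' t.castSucc) (x 0, x t.succ) (x t.castSucc)
        = g t.castSucc / g t.succ * K t (x t.castSucc) (x t.succ) := by
    intro t
    have hnum : univ.filter (fun x' : Fin (n + 1) → S =>
          (x' 0, x' t.succ) = (x 0, x t.succ) ∧ x' t.castSucc = x t.castSucc)
        = univ.filter (fun x' => x' 0 = x 0 ∧ x' t.castSucc = x t.castSucc ∧
            x' t.succ = x t.succ) :=
      filter_congr fun _ _ => by simp only [Prod.mk.injEq]; tauto
    rw [condMass, hnum, sum_filter_step_chainWeight μ hK]
    simp only [Prod.mk.injEq, g]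
    ring
  have hlast : condMass (chainWeight μ K) (fun x' => x' 0) (fun x' => x' (Fin.last n))
      (x 0) (x (Fin.last n)) = g (Fin.last n) / μ (x 0) := by
    rw [condMass, sum_filter_zero_chainWeight μ hK]
  have hμ : μ (x 0) ≠ 0 := hg0 ▸ hg 0
  rw [prod_congr rfl fun t _ => hfactor t, prod_mul_distrib, Fin.prod_castSucc_div_succ hg, hg0,
    hlast]
  field_simp [hμ, hg (Fin.last n)]
  rfl

theorem sum_mul_log_div_chainWeight (μ : S → ℝ) {K : Fin n → S → S → ℝ}
    (hK : ∀ t z, ∑ b, K t z b = 1) (hpos : ∀ x, 0 < chainWeight μ K x)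
    {π : S → ℝ} (hπ : ∀ y, 0 < π y) {R : Fin n → S → S → ℝ} (hR : ∀ t x y, 0 < R t x y) :
    ∑ x, chainWeight μ K x * Real.log (π (x (Fin.last n)) * (∏ t, R t (x t.succ) (x t.castSucc))
        / (chainWeight μ K x / μ (x 0)))
      = -∑ t : Fin n, ∑ x, chainWeight μ K x * KLdiv (condMass (chainWeight μ K)
            (fun x' => (x' 0, x' t.succ)) (fun x' => x' t.castSucc) (x 0, x t.succ))
            (R t (x t.succ))
        - ∑ a, μ a * KLdiv (condMass (chainWeight μ K) (fun x' => x' 0)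
            (fun x' => x' (Fin.last n)) a) π := by
  have hpointwise : ∀ x, Real.log (π (x (Fin.last n)) * (∏ t, R t (x t.succ) (x t.castSucc))
      / (chainWeight μ K x / μ (x 0)))
        = -(Real.log (condMass (chainWeight μ K) (fun x' => x' 0) (fun x' => x' (Fin.last n))
              (x 0) (x (Fin.last n)) / π (x (Fin.last n)))
            + ∑ t, Real.log (condMass (chainWeight μ K) (fun x' => (x' 0, x' t.succ))
              (fun x' => x' t.castSucc) (x 0, x t.succ) (x t.castSucc)
                / R t (x t.succ) (x t.castSucc))) :=
    fun x => by
      rw [chainWeight_div_eq_condMass_mul_prod μ hK hpos x]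
      exact log_mul_prod_div_mul_prod univ (hπ _) (condMass_pos hpos _ _ x)
        (fun t _ => hR _ _ _) (fun t _ => condMass_pos hpos _ _ x)
  have hw : ∀ x, 0 ≤ chainWeight μ K x := fun x => (hpos x).le
  simp only [hpointwise, mul_neg, mul_add, mul_sum, sum_neg_distrib, sum_add_distrib]
  rw [sum_comm, sum_mul_log_condMass_div hw _ _ fun _ => π,
    sum_chainWeight_mul_comp_zero μ hK fun a => KLdiv (condMass _ _ _ a) π, neg_add_rev,
    ← sub_eq_add_neg, sub_left_inj, neg_inj]
  exact sum_congr rfl fun t _ => sum_mul_log_condMass_div hw _ _ fun ab : S × S => R t ab.2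

end Chain

/-- Step `t : Fin T` is step `t + 1` of the paper, from time `t.castSucc` to time `t.succ`;
the reconstruction term is step `0`. -/
theorem vlb_decomposition_general
    (S : Type) [Fintype S] [DecidableEq S] (T : ℕ) (hT : 0 < T)
    (μ : S → ℝ)
    (K : Fin T → S → S → ℝ)
    (hK1 : ∀ t x, ∑ y, K t x y = 1)
    (q : (Fin (T + 1) → S) → ℝ)
    (hq : ∀ x, q x = μ (x 0) * ∏ s : Fin T, K s (x s.castSucc) (x s.succ))
    (hqpos : ∀ x, 0 < q x)
    (π : S → ℝ) (hπ0 : ∀ y, 0 < π y)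
    (R : Fin T → S → S → ℝ)
    (hR0 : ∀ t x y, 0 < R t x y)
    (p : (Fin (T + 1) → S) → ℝ)
    (hp : ∀ x, p x = π (x (Fin.last T)) *
        ∏ t : Fin T, R t (x t.succ) (x t.castSucc))
    (post : Fin T → S → S → S → ℝ)
    (hpost : ∀ (t : Fin T) (a b z : S), post t a b z =
      (∑ x ∈ univ.filter (fun x : Fin (T + 1) → S =>
          x 0 = a ∧ x t.castSucc = z ∧ x t.succ = b), q x)
        / (∑ x ∈ univ.filter
            (fun x : Fin (T + 1) → S => x 0 = a ∧ x t.succ = b), q x))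
    (condT : S → S → ℝ)
    (hcondT : ∀ a b, condT a b =
      (∑ x ∈ univ.filter
          (fun x : Fin (T + 1) → S => x 0 = a ∧ x (Fin.last T) = b), q x) / μ a) :
    (∑ x, q x * Real.log (p x / (q x / μ (x 0))))
      = (∑ x, q x * Real.log (R ⟨0, hT⟩ (x (⟨0, hT⟩ : Fin T).succ)
            (x (⟨0, hT⟩ : Fin T).castSucc)))
        - (∑ t ∈ univ.filter (fun t : Fin T => 1 ≤ (t : ℕ)),
            ∑ x, q x * KLdiv (post t (x 0) (x t.succ)) (R t (x t.succ)))
        - (∑ a, μ a * KLdiv (condT a) (π)) := by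
  obtain rfl : q = chainWeight μ K := funext hq
  set t₀ : Fin T := ⟨0, hT⟩
  have hpost' : ∀ t a b, post t a b = condMass (chainWeight μ K) (fun x => (x 0, x t.succ))
      (fun x => x t.castSucc) (a, b) := by
    intro t a b
    funext z
    rw [hpost, condMass]
    congr 2 <;> ext x <;> simp only [mem_filter, mem_univ, true_and, Prod.mk.injEq]
    tauto
  have hcondT' : ∀ a, condT a = condMass (chainWeight μ K) (fun x => x 0)
      (fun x => x (Fin.last T)) a :=
    fun a => funext fun b => by rw [hcondT, condMass, sum_filter_zero_chainWeight μ hK1]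
  have hrec : ∀ x : Fin (T + 1) → S, KLdiv (post t₀ (x 0) (x t₀.succ)) (R t₀ (x t₀.succ))
      = -Real.log (R t₀ (x t₀.succ) (x t₀.castSucc)) := fun x => by
    rw [hpost', condMass_eq_ite_of_comp hqpos (φ := fun x' => (x' 0, x' t₀.succ))
      (ψ := fun x' => x' t₀.castSucc) (f := Prod.fst) (fun _ => rfl) x]
    exact KLdiv_ite_eq _ _
  have hsteps : univ.filter (fun t : Fin T => 1 ≤ (t : ℕ)) = univ.erase t₀ := by
    ext t
    simp [t₀, Fin.ext_iff, Nat.one_le_iff_ne_zero]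
  simp only [hp]
  rw [sum_mul_log_div_chainWeight μ hK1 hqpos hπ0 hR0, ← add_sum_erase _ _ (mem_univ t₀), ← hsteps]
  simp only [← hpost', ← hcondT', hrec, mul_neg, sum_neg_distrib]
  ring

/-- Decomposition of the variational lower bound (Eqs. 14–18 of the paper):
for a strictly positive forward chain `q` and a strictly positive generative law
`p x = π (x_T) * ∏ t, R t (x_{t+1}) (x_t)`,
`E_q[log (p(X_{0:T}) / q(X_{1:T} ∣ X_0))]
  = E_q[log R_1(X_1)(X_0)]
    − ∑_{t=2}^T E_q[D(q(X_{t−1} ∈ · ∣ X_t, X_0) ‖ R_t(X_t))]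
    − E_μ[D(q(X_T ∈ · ∣ X_0) ‖ π)]`.
Here steps are indexed by `t : Fin T`: step `t` relates time `t.castSucc` (= t−1 of the
1-based paper notation) and time `t.succ` (= t); the reconstruction term corresponds to
the step with `(t : ℕ) = 0` and the per-step KL terms to the steps with `1 ≤ (t : ℕ)`.
`post t a b` is the forward-chain posterior `q(X_{t−1} ∈ · ∣ X_t = b, X_0 = a)` and
`condT a` is `q(X_T ∈ · ∣ X_0 = a)`. -/
theorem vlb_decomposition
    (S : Type) [Fintype S] [DecidableEq S] (T : ℕ) (hT : 0 < T)
    (μ : S → ℝ) (hμ0 : ∀ x, 0 ≤ μ x) (hμ1 : ∑ x, μ x = 1)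
    (K : Fin T → S → S → ℝ)
    (hK0 : ∀ t x y, 0 ≤ K t x y) (hK1 : ∀ t x, ∑ y, K t x y = 1)
    (q : (Fin (T + 1) → S) → ℝ)
    (hq : ∀ x, q x = μ (x 0) * ∏ s : Fin T, K s (x s.castSucc) (x s.succ))
    (hqpos : ∀ x, 0 < q x)
    (π : S → ℝ) (hπ0 : ∀ y, 0 < π y) (hπ1 : ∑ y, π y = 1)
    (R : Fin T → S → S → ℝ)
    (hR0 : ∀ t x y, 0 < R t x y) (hR1 : ∀ t x, ∑ y, R t x y = 1)
    (p : (Fin (T + 1) → S) → ℝ)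
    (hp : ∀ x, p x = π (x (Fin.last T)) *
        ∏ t : Fin T, R t (x t.succ) (x t.castSucc))
    (post : Fin T → S → S → S → ℝ)
    (hpost : ∀ (t : Fin T) (a b z : S), post t a b z =
      (∑ x ∈ univ.filter (fun x : Fin (T + 1) → S =>
          x 0 = a ∧ x t.castSucc = z ∧ x t.succ = b), q x)
        / (∑ x ∈ univ.filter
            (fun x : Fin (T + 1) → S => x 0 = a ∧ x t.succ = b), q x))
    (condT : S → S → ℝ)
    (hcondT : ∀ a b, condT a b =
      (∑ x ∈ univ.filter
          (fun x : Fin (T + 1) → S => x 0 = a ∧ x (Fin.last T) = b), q x) / μ a) :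
    (∑ x, q x * Real.log (p x / (q x / μ (x 0))))
      = (∑ x, q x * Real.log (R ⟨0, hT⟩ (x (⟨0, hT⟩ : Fin T).succ)
            (x (⟨0, hT⟩ : Fin T).castSucc)))
        - (∑ t ∈ univ.filter (fun t : Fin T => 1 ≤ (t : ℕ)),
            ∑ x, q x * KLdiv (post t (x 0) (x t.succ)) (R t (x t.succ)))
        - (∑ a, μ a * KLdiv (condT a) (π)) :=
  vlb_decomposition_general S T hT μ K hK1 q hq hqpos π hπ0 R hR0 p hp post hpost condT hcondT
end
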